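/- For every l ∈ {0,1,2} and m ∈ {0,1,…,n−1}, one has φ(P_{l,m}) = P_{l+1 mod 3, m}. Consequently the set of 3n points { P_{l,m} } is invariant under φ and decomposes into exactly n orbits { P_{0,m}, P_{1,m}, P_{2,m} }, each of size three, under the action of the group generated by φ. -/

import Mathlib

open Complex

noncomputable def ρ : ℂ := Complex.exp (2 * Real.pi * Complex.I / 3)

noncomputable def a : ℂ := (1 - ρ) / 3

noncomputable def Δn (n : ℕ) : AddSubgroup ℂ := AddSubgroup.closure {(n : ℂ), 1 - ρ}

noncomputable def Δ : AddSubgroup ℂ := AddSubgroup.closure {1, ρ}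

abbrev G : Type := ℂ ⧸ Δ

abbrev Gn (n : ℕ) : Type := ℂ ⧸ Δn n

abbrev An (n : ℕ) : Type := G × Gn n

noncomputable def mkG : ℂ → G := QuotientAddGroup.mk

noncomputable def mkGn (n : ℕ) : ℂ → Gn n := QuotientAddGroup.mk

/-- The point P_{l,m} = ([2/3 + l·a], [2/3 + l·a + m]ₙ). -/
noncomputable def P (n : ℕ) (l : Fin 3) (m : Fin n) : An n :=
  (mkG (2 / 3 + (l.val : ℂ) * a), mkGn n (2 / 3 + (l.val : ℂ) * a + (m.val : ℂ)))

/-!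
Index the points by `k : ℕ` instead of `l : Fin 3`. Since `3a = 1 - ρ` lies in both `Δ` and `Δₙ`,
the points are `3`-periodic in `k`, and `φ` shifts `k` by one: in the second coordinate `φ` adds
`a`, and in the first `ρ (2/3 + k a) - (2/3 + (k+1) a) = (k+1) ρ - 1 ∈ Δ` because
`ρ² + ρ + 1 = 0`. The `3n` points are distinct because `1` and `ρ` are linearly independent
over `ℤ` (compare imaginary parts): `(l - l') a ∈ Δ` forces `3 ∣ l - l'`, and `m - m' ∈ Δₙ`
forces `n ∣ m - m'`.
-/

open Fin.NatCast

lemma isPrimitiveRoot_ρ : IsPrimitiveRoot ρ 3 := by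
  simpa [ρ] using Complex.isPrimitiveRoot_exp 3 (by norm_num)

lemma ρ_sq_add_ρ_add_one : ρ ^ 2 + ρ + 1 = 0 := by
  have h := isPrimitiveRoot_ρ.geom_sum_eq_zero (by norm_num)
  simp only [Finset.sum_range_succ, Finset.sum_range_zero] at h
  linear_combination h

lemma ρ_im_ne_zero : ρ.im ≠ 0 := by
  intro h
  have hreal : ρ = (ρ.re : ℂ) := Complex.ext rfl (by simp [h])
  have hroot : ρ.re ^ 2 + ρ.re + 1 = 0 := by
    exact_mod_cast hreal ▸ ρ_sq_add_ρ_add_one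
  nlinarith [sq_nonneg (ρ.re + 1 / 2)]

lemma eq_zero_of_intCast_add_intCast_mul_ρ_eq_zero {p q : ℤ} (h : (p : ℂ) + q * ρ = 0) :
    p = 0 ∧ q = 0 := by
  have hq : q = 0 := by
    have him := congrArg Complex.im h
    simp only [add_im, intCast_im, mul_im, intCast_re, zero_mul, add_zero, zero_add,
      zero_im] at him
    exact_mod_cast (mul_eq_zero.mp him).resolve_right ρ_im_ne_zero
  subst hq
  exact ⟨by simpa using h, rfl⟩

lemma three_mul_a : 3 * a = 1 - ρ := by
  rw [a]; ring

lemma ρ_mul_two_thirds_add_natCast_mul_a_sub (k : ℕ) :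
    ρ * (2 / 3 + k * a) - (2 / 3 + (k + 1 : ℕ) * a) = (k + 1 : ℕ) * ρ - 1 := by
  rw [a]; push_cast
  linear_combination (-k / 3 : ℂ) * ρ_sq_add_ρ_add_one

lemma mem_Δ_iff {z : ℂ} : z ∈ Δ ↔ ∃ p q : ℤ, (p : ℂ) + q * ρ = z := by
  simp [Δ, AddSubgroup.mem_closure_pair, zsmul_eq_mul]

lemma mem_Δn_iff {n : ℕ} {z : ℂ} : z ∈ Δn n ↔ ∃ p q : ℤ, (p : ℂ) * n + q * (1 - ρ) = z := by
  simp [Δn, AddSubgroup.mem_closure_pair, zsmul_eq_mul]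

lemma three_dvd_of_intCast_mul_a_mem_Δ {k : ℤ} (h : (k : ℂ) * a ∈ Δ) : 3 ∣ k := by
  obtain ⟨p, q, hpq⟩ := mem_Δ_iff.mp h
  have hlin : ((k - 3 * p : ℤ) : ℂ) + ((-k - 3 * q : ℤ) : ℂ) * ρ = 0 := by
    push_cast
    linear_combination -3 * hpq - k * three_mul_a
  exact ⟨p, by linarith [(eq_zero_of_intCast_add_intCast_mul_ρ_eq_zero hlin).1]⟩

lemma dvd_of_intCast_mem_Δn {n : ℕ} {k : ℤ} (h : (k : ℂ) ∈ Δn n) : (n : ℤ) ∣ k := by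
  obtain ⟨p, q, hpq⟩ := mem_Δn_iff.mp h
  have hlin : ((p * n + q - k : ℤ) : ℂ) + ((-q : ℤ) : ℂ) * ρ = 0 := by
    push_cast
    linear_combination hpq
  obtain ⟨hp, hq⟩ := eq_zero_of_intCast_add_intCast_mul_ρ_eq_zero hlin
  exact ⟨p, by linarith⟩

def IsPhi (n : ℕ) (φ : An n → An n) : Prop :=
  ∀ w z : ℂ, φ (mkG w, mkGn n z) = (mkG (ρ * w), mkGn n (z + a))

noncomputable def Pnat (n k : ℕ) (m : Fin n) : An n :=
  (mkG (2 / 3 + (k : ℂ) * a), mkGn n (2 / 3 + (k : ℂ) * a + (m.val : ℂ)))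

section Points

variable {n : ℕ} {φ : An n → An n}

lemma Pnat_periodic (m : Fin n) : Function.Periodic (Pnat n · m) 3 := by
  intro k
  refine Prod.ext (QuotientAddGroup.eq_iff_sub_mem.mpr (mem_Δ_iff.mpr ⟨1, -1, ?_⟩))
    (QuotientAddGroup.eq_iff_sub_mem.mpr (mem_Δn_iff.mpr ⟨0, 1, ?_⟩)) <;>
  · push_cast
    linear_combination -three_mul_a

lemma P_eq_Pnat (l : Fin 3) (m : Fin n) : P n l m = Pnat n l m := rfl

lemma Pnat_eq_P (k : ℕ) (m : Fin n) : Pnat n k m = P n k m := by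
  rw [P_eq_Pnat, Fin.val_natCast, (Pnat_periodic m).map_mod_nat]

lemma P_inj {l l' : Fin 3} {m m' : Fin n} : P n l m = P n l' m' ↔ l = l' ∧ m = m' := by
  refine ⟨fun h => ?_, fun h => h.1 ▸ h.2 ▸ rfl⟩
  obtain ⟨h1, h2⟩ := Prod.ext_iff.mp h
  simp only [P, mkG, mkGn, QuotientAddGroup.eq_iff_sub_mem] at h1 h2
  have hl : l = l' := by
    have h3 := three_dvd_of_intCast_mul_a_mem_Δ (k := l - l') <| by
      convert h1 using 1; push_cast; ring
    omega
  subst hl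
  refine ⟨rfl, Fin.ext ?_⟩
  have hdvd := dvd_of_intCast_mem_Δn (n := n) (k := m - m') <| by
    convert h2 using 1; push_cast; ring
  have := Int.eq_zero_of_abs_lt_dvd hdvd (abs_sub_lt_iff.mpr ⟨by omega, by omega⟩)
  omega

lemma range_P (m : Fin n) :
    Set.range (P n · m) = ({P n 0 m, P n 1 m, P n 2 m} : Set (An n)) := by
  ext x
  simp only [Set.mem_range, Fin.exists_fin_succ, Fin.exists_fin_zero, Fin.succ_zero_eq_one,
    Fin.succ_one_eq_two, or_false, Set.mem_insert_iff, Set.mem_singleton_iff, eq_comm]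

lemma IsPhi.map_Pnat (hφ : IsPhi n φ) (k : ℕ) (m : Fin n) :
    φ (Pnat n k m) = Pnat n (k + 1) m := by
  rw [Pnat, hφ, Pnat]
  refine Prod.ext (QuotientAddGroup.eq_iff_sub_mem.mpr ?_) (congrArg (mkGn n) ?_)
  · rw [ρ_mul_two_thirds_add_natCast_mul_a_sub]
    exact mem_Δ_iff.mpr ⟨-1, k + 1, by push_cast; ring⟩
  · push_cast; ring

lemma IsPhi.iterate_Pnat (hφ : IsPhi n φ) (j k : ℕ) (m : Fin n) :
    φ^[j] (Pnat n k m) = Pnat n (k + j) m := by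
  induction j with
  | zero => rfl
  | succ j ih => rw [Function.iterate_succ_apply', ih, hφ.map_Pnat, add_assoc]

lemma IsPhi.iterate_P (hφ : IsPhi n φ) (j : ℕ) (l : Fin 3) (m : Fin n) :
    φ^[j] (P n l m) = P n (l + j) m := by
  rw [P_eq_Pnat, hφ.iterate_Pnat, Pnat_eq_P]
  push_cast [Fin.cast_val_eq_self]
  rfl

lemma IsPhi.map_P (hφ : IsPhi n φ) (l : Fin 3) (m : Fin n) : φ (P n l m) = P n (l + 1) m := by
  simpa using hφ.iterate_P 1 l m

lemma IsPhi.image_setOf_P (hφ : IsPhi n φ) :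
    φ '' {p | ∃ (l : Fin 3) (m : Fin n), p = P n l m} =
      {p | ∃ (l : Fin 3) (m : Fin n), p = P n l m} := by
  ext x
  simp only [Set.mem_image, Set.mem_ofPred_eq]
  constructor
  · rintro ⟨_, ⟨l, m, rfl⟩, rfl⟩
    exact ⟨l + 1, m, hφ.map_P l m⟩
  · rintro ⟨l, m, rfl⟩
    exact ⟨P n (l - 1) m, ⟨l - 1, m, rfl⟩, by rw [hφ.map_P, sub_add_cancel]⟩

lemma IsPhi.orbit_P (hφ : IsPhi n φ) (l : Fin 3) (m : Fin n) :
    {x | ∃ k : ℕ, x = φ^[k] (P n l m)} = Set.range (P n · m) := by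
  ext x
  simp only [Set.mem_ofPred_eq, Set.mem_range]
  constructor
  · rintro ⟨k, rfl⟩
    exact ⟨l + k, (hφ.iterate_P k l m).symm⟩
  · rintro ⟨j, rfl⟩
    exact ⟨(j - l).val, by rw [hφ.iterate_P, Fin.cast_val_eq_self, add_sub_cancel]⟩

end Points

theorem stmt11_general (n : ℕ) (φ : An n → An n)
    (hφ : ∀ w z : ℂ, φ (mkG w, mkGn n z) = (mkG (ρ * w), mkGn n (z + a))) :
    (∀ (l : Fin 3) (m : Fin n), φ (P n l m) = P n (l + 1) m) ∧
    (φ '' {p | ∃ (l : Fin 3) (m : Fin n), p = P n l m}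
      = {p | ∃ (l : Fin 3) (m : Fin n), p = P n l m}) ∧
    (∀ (l : Fin 3) (m : Fin n),
      {x | ∃ k : ℕ, x = φ^[k] (P n l m)} = ({P n 0 m, P n 1 m, P n 2 m} : Set (An n))) ∧
    (∀ m : Fin n, ({P n 0 m, P n 1 m, P n 2 m} : Set (An n)).ncard = 3) ∧
    (∀ m m' : Fin n, m ≠ m' →
      Disjoint ({P n 0 m, P n 1 m, P n 2 m} : Set (An n))
        ({P n 0 m', P n 1 m', P n 2 m'} : Set (An n))) := by
  refine ⟨IsPhi.map_P hφ, IsPhi.image_setOf_P hφ,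
    fun l m => (IsPhi.orbit_P hφ l m).trans (range_P m), ?_, ?_⟩
  · intro m
    rw [← range_P, Set.ncard_range_of_injective (fun l l' h => (P_inj.mp h).1), Nat.card_fin]
  · intro m m' hm
    rw [← range_P, ← range_P, Set.disjoint_range_iff]
    exact fun l l' h => hm (P_inj.mp h).2

/-- `φ(P_{l,m}) = P_{l+1 mod 3, m}`; hence the set of the `3n` points `P_{l,m}` is
`φ`-invariant and decomposes into exactly `n` orbits `{P_{0,m}, P_{1,m}, P_{2,m}}`,
each of size three. -/
theorem stmt11 (n : ℕ) (hn : 0 < n) (φ : An n → An n)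
    (hφ : ∀ w z : ℂ, φ (mkG w, mkGn n z) = (mkG (ρ * w), mkGn n (z + a))) :
    (∀ (l : Fin 3) (m : Fin n), φ (P n l m) = P n (l + 1) m) ∧
    (φ '' {p | ∃ (l : Fin 3) (m : Fin n), p = P n l m}
      = {p | ∃ (l : Fin 3) (m : Fin n), p = P n l m}) ∧
    (∀ (l : Fin 3) (m : Fin n),
      {x | ∃ k : ℕ, x = φ^[k] (P n l m)} = ({P n 0 m, P n 1 m, P n 2 m} : Set (An n))) ∧
    (∀ m : Fin n, ({P n 0 m, P n 1 m, P n 2 m} : Set (An n)).ncard = 3) ∧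
    (∀ m m' : Fin n, m ≠ m' →
      Disjoint ({P n 0 m, P n 1 m, P n 2 m} : Set (An n))
        ({P n 0 m', P n 1 m', P n 2 m'} : Set (An n))) :=
  stmt11_general n φ hφ
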